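/- Let n+1 = 2m+1 with m ≥ 2 and ω = exp(2πi/(n+1)). For ℓ ∈ {0,1,n} let R_ℓ be the set of ordered pairs (i,j) with 0 ≤ i,j ≤ n, i ≠ j, such that ω^j − ω^i = r·exp(−(2ℓ+1)πi/(2(n+1))) for some real r > 0. If m = 2c then: R_0 = {(2c,0),(2c−1,1),…,(c+1,c−1)} ∪ {(2c+1,4c),(2c+2,4c−1),…,(3c,3c+1)}; R_1 = {(2c,4c),(2c+1,4c−1),…,(3c−1,3c+1)} ∪ {(2c−1,0),(2c−2,1),…,(c,c−1)}; R_n = {(4c,2c+2),(4c−1,2c+3),…,(3c+2,3c)} ∪ {(0,2c+1),(1,2c),…,(c,c+1)}. If m = 2c+1 then: R_0 = {(2c+1,0),(2c,1),…,(c+1,c)} ∪ {(2c+2,4c+2),(2c+3,4c+1),…,(3c+1,3c+3)}; R_1 = {(2c,0),(2c−1,1),…,(c+1,c−1)} ∪ {(2c+1,4c+2),(2c+2,4c+1),…,(3c+1,3c+2)}; R_n = {(0,2c+2),(1,2c+1),…,(c,c+2)} ∪ {(4c+2,2c+3),(4c+1,2c+4),…,(3c+3,3c+2)}. -/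

import Mathlib

/-!
By sum-to-product, `ω^j - ω^i = 2 sin(π(j - i)/(n+1)) · exp(i(π(i+j)/(n+1) + π/2))`, and relative to
`θ_ℓ = -(2ℓ+1)π/(2(n+1))` the phase of the exponential is `πK/(n+1)` with `K = i+j+ℓ+m+1`, because
`n + 1 = 2m + 1`. A real multiple `s · exp(ix)` is a positive real exactly when `s > 0` and
`x ∈ 2πℤ`, or `s < 0` and `x ∈ π + 2πℤ`; the sign of the sine is that of `j - i`. As
`0 < K < 4(n+1)`, the root `α_{i,j}` lies on the ray `θ_ℓ` iff `i < j` and `K = 2(n+1)`, or `j < i`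
and `K ∈ {n+1, 3(n+1)}`. So each `R_ℓ` consists of segments of the anti-diagonals
`i + j = const`, which are read off for `ℓ = 0, 1, n`.
-/

open Complex
open scoped Real

theorem exp_mul_I_sub_exp_mul_I (a b : ℝ) :
    exp (a * I) - exp (b * I) =
      (2 * Real.sin ((a - b) / 2) : ℝ) * exp (((a + b) / 2 + π / 2 : ℝ) * I) := by
  apply Complex.ext <;>
    simp only [sub_re, sub_im, exp_ofReal_mul_I_re, exp_ofReal_mul_I_im, mul_re, mul_im,
      ofReal_re, ofReal_im, zero_mul, sub_zero, add_zero]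
  · rw [Real.cos_sub_cos, Real.cos_add_pi_div_two]; ring
  · rw [Real.sin_sub_sin, Real.sin_add_pi_div_two]

theorem exists_pos_ofReal_mul_exp_mul_I_eq_iff (s x : ℝ) :
    (∃ r : ℝ, 0 < r ∧ (s : ℂ) * exp (x * I) = r) ↔
      (0 < s ∧ ∃ q : ℤ, x = q * (2 * π)) ∨ (s < 0 ∧ ∃ q : ℤ, x = q * (2 * π) + π) := by
  constructor
  · rintro ⟨r, hr, h⟩
    obtain ⟨hre, him⟩ := Complex.ext_iff.mp h
    simp only [mul_re, mul_im, ofReal_re, ofReal_im, exp_ofReal_mul_I_re, exp_ofReal_mul_I_im,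
      zero_mul, sub_zero, add_zero] at hre him
    have hs : s ≠ 0 := by rintro rfl; linarith
    obtain ⟨k, hk⟩ := Real.sin_eq_zero_iff.mp ((mul_eq_zero.mp him).resolve_left hs)
    obtain ⟨q, rfl | rfl⟩ := Int.even_or_odd' k
    · have hx : x = q * (2 * π) := by rw [← hk]; push_cast; ring
      rw [hx, Real.cos_int_mul_two_pi] at hre
      exact Or.inl ⟨by linarith, q, hx⟩
    · have hx : x = q * (2 * π) + π := by rw [← hk]; push_cast; ring
      rw [hx, Real.cos_int_mul_two_pi_add_pi] at hre
      exact Or.inr ⟨by linarith, q, hx⟩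
  · rintro (⟨hs, q, rfl⟩ | ⟨hs, q, rfl⟩)
    · refine ⟨s, hs, ?_⟩
      rw [show ((q * (2 * π) : ℝ) : ℂ) * I = q * (2 * π * I) by push_cast; ring,
        exp_int_mul_two_pi_mul_I, mul_one]
    · refine ⟨-s, by linarith, ?_⟩
      rw [show ((q * (2 * π) + π : ℝ) : ℂ) * I = q * (2 * π * I) + π * I by push_cast; ring,
        exp_add, exp_int_mul_two_pi_mul_I, exp_pi_mul_I]
      push_cast; ring

theorem exists_pos_ofReal_mul_exp_mul_I_eq_mul_exp_iff (s ψ θ : ℝ) :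
    (∃ r : ℝ, 0 < r ∧ (s : ℂ) * exp (ψ * I) = r * exp (θ * I)) ↔
      (0 < s ∧ ∃ q : ℤ, ψ - θ = q * (2 * π)) ∨ (s < 0 ∧ ∃ q : ℤ, ψ - θ = q * (2 * π) + π) := by
  rw [← exists_pos_ofReal_mul_exp_mul_I_eq_iff]
  refine exists_congr fun r => and_congr_right' ?_
  have hψ : exp (ψ * I) = exp ((ψ - θ : ℝ) * I) * exp (θ * I) := by
    rw [← exp_add]; push_cast; ring_nf
  rw [hψ, ← mul_assoc, mul_left_inj' (exp_ne_zero _)]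

theorem exists_int_pi_mul_div_eq_iff {N : ℕ} (hN : N ≠ 0) (K : ℕ) :
    (∃ q : ℤ, π * K / N = q * (2 * π)) ↔ 2 * N ∣ K := by
  rw [← Int.natCast_dvd_natCast]
  refine exists_congr fun q => ?_
  rw [div_eq_iff (by positivity), ← @Int.cast_inj ℝ]
  push_cast
  rw [show (q : ℝ) * (2 * π) * N = π * (2 * N * q) by ring, mul_right_inj' Real.pi_ne_zero]

theorem exists_int_pi_mul_div_eq_add_pi_iff {N : ℕ} (hN : N ≠ 0) (K : ℕ) :
    (∃ q : ℤ, π * K / N = q * (2 * π) + π) ↔ 2 * N ∣ K + N := by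
  rw [← exists_int_pi_mul_div_eq_iff hN]
  have hshift : π * ((K + N : ℕ) : ℝ) / N = π * K / N + π := by
    have : (N : ℝ) ≠ 0 := by positivity
    push_cast; field_simp
  rw [hshift]
  constructor
  · rintro ⟨q, hq⟩
    exact ⟨q + 1, by rw [hq]; push_cast; ring⟩
  · rintro ⟨q, hq⟩
    exact ⟨q - 1, by push_cast; linarith⟩

theorem Nat.dvd_iff_of_lt_three_mul {a d : ℕ} (h : a < 3 * d) :
    d ∣ a ↔ a = 0 ∨ a = d ∨ a = 2 * d := by
  constructor
  · rintro ⟨q, rfl⟩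
    have : q < 3 := Nat.lt_of_mul_lt_mul_left (by rwa [mul_comm 3] at h)
    interval_cases q <;> simp [mul_comm]
  · rintro (rfl | rfl | rfl) <;> simp

theorem sin_pi_mul_sub_div_pos_iff {N i j : ℕ} (hi : i < N) (hj : j < N) :
    0 < Real.sin (π * ((j : ℝ) - i) / N) ↔ i < j := by
  have hN : (0 : ℝ) < N := Nat.cast_pos.mpr (by omega)
  have hi' : (i : ℝ) < N := by exact_mod_cast hi
  have hj' : (j : ℝ) < N := by exact_mod_cast hj
  constructor
  · intro h
    by_contra! hji
    have hji' : (j : ℝ) ≤ i := by exact_mod_cast hji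
    refine h.not_ge (Real.sin_nonpos_of_nonpos_of_neg_pi_le ?_ ?_)
    · exact div_nonpos_of_nonpos_of_nonneg (by nlinarith [Real.pi_pos]) hN.le
    · rw [le_div_iff₀ hN]; nlinarith [Real.pi_pos]
  · intro hij
    have hij' : (i : ℝ) < j := by exact_mod_cast hij
    apply Real.sin_pos_of_pos_of_lt_pi
    · exact div_pos (by nlinarith [Real.pi_pos]) hN
    · rw [div_lt_iff₀ hN]; nlinarith [Real.pi_pos]

theorem sin_pi_mul_sub_div_neg_iff {N i j : ℕ} (hi : i < N) (hj : j < N) :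
    Real.sin (π * ((j : ℝ) - i) / N) < 0 ↔ j < i := by
  rw [← sin_pi_mul_sub_div_pos_iff hj hi, ← neg_pos, ← Real.sin_neg]
  ring_nf

theorem pow_sub_pow_eq_ofReal_mul_exp {N : ℕ} {ω : ℂ} (hω : ω = exp (2 * π * I / N)) (i j : ℕ) :
    ω ^ j - ω ^ i =
      (2 * Real.sin (π * ((j : ℝ) - i) / N) : ℝ) * exp ((π * (i + j) / N + π / 2 : ℝ) * I) := by
  have hpow (k : ℕ) : ω ^ k = exp ((2 * π * k / N : ℝ) * I) := by
    rw [hω, ← exp_nat_mul]; push_cast; ring_nf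
  rw [hpow, hpow, exp_mul_I_sub_exp_mul_I]
  ring_nf

theorem exists_pos_pow_sub_pow_eq_iff {n m ℓ : ℕ} (hnm : n + 1 = 2 * m + 1) {ω : ℂ}
    (hω : ω = exp (2 * π * I / (n + 1))) {i j : ℕ} (hℓ : ℓ ≤ n) (hi : i ≤ n) (hj : j ≤ n) :
    (∃ r : ℝ, 0 < r ∧ ω ^ j - ω ^ i =
        r * exp (-((2 * (ℓ : ℂ) + 1) * π * I) / (2 * (n + 1)))) ↔
      (i < j ∧ i + j + ℓ + m + 1 = 2 * (n + 1)) ∨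
      (j < i ∧ (i + j + ℓ + m + 1 = n + 1 ∨ i + j + ℓ + m + 1 = 3 * (n + 1))) := by
  have hN : n + 1 ≠ 0 := n.succ_ne_zero
  have hθ : exp (-((2 * (ℓ : ℂ) + 1) * π * I) / (2 * (n + 1))) =
      exp ((-((2 * ℓ + 1) * π / (2 * (n + 1 : ℕ))) : ℝ) * I) := by
    congr 1; push_cast; ring
  have hphase : π * (i + j) / (n + 1 : ℕ) + π / 2 - -((2 * ℓ + 1) * π / (2 * (n + 1 : ℕ))) =
      π * (i + j + ℓ + m + 1 : ℕ) / (n + 1 : ℕ) := by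
    rw [hnm]; push_cast; field_simp; ring
  have hpos : 0 < 2 * Real.sin (π * ((j : ℝ) - i) / (n + 1 : ℕ)) ↔ i < j := by
    rw [mul_pos_iff_of_pos_left two_pos, sin_pi_mul_sub_div_pos_iff (by omega) (by omega)]
  have hneg : 2 * Real.sin (π * ((j : ℝ) - i) / (n + 1 : ℕ)) < 0 ↔ j < i := by
    rw [← sin_pi_mul_sub_div_neg_iff (N := n + 1) (by omega) (by omega)]
    constructor <;> intro <;> linarith
  have hω' : ω = exp (2 * π * I / (n + 1 : ℕ)) := by rw [hω, Nat.cast_add_one]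
  rw [pow_sub_pow_eq_ofReal_mul_exp hω', hθ, exists_pos_ofReal_mul_exp_mul_I_eq_mul_exp_iff, hphase,
    hpos, hneg, exists_int_pi_mul_div_eq_iff hN, exists_int_pi_mul_div_eq_add_pi_iff hN,
    Nat.dvd_iff_of_lt_three_mul (by omega), Nat.dvd_iff_of_lt_three_mul (by omega)]
  omega

section AntidiagonalSegments

variable {i j A B T : ℕ}

theorem exists_lt_eq_sub_self_iff (hT : T ≤ A) :
    (∃ t < T, (i, j) = (A - t, t)) ↔ j < T ∧ i + j = A := by
  simp only [Prod.mk.injEq]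
  exact ⟨fun ⟨t, ht, hi, hj⟩ => by omega, fun h => ⟨j, by omega⟩⟩

theorem exists_lt_eq_self_sub_iff (hT : T ≤ B) :
    (∃ t < T, (i, j) = (t, B - t)) ↔ i < T ∧ i + j = B := by
  simp only [Prod.mk.injEq]
  exact ⟨fun ⟨t, ht, hi, hj⟩ => by omega, fun h => ⟨i, by omega⟩⟩

theorem exists_lt_eq_add_sub_iff (hT : T ≤ B) :
    (∃ t < T, (i, j) = (A + t, B - t)) ↔ A ≤ i ∧ i < A + T ∧ i + j = A + B := by
  simp only [Prod.mk.injEq]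
  exact ⟨fun ⟨t, ht, hi, hj⟩ => by omega, fun h => ⟨i - A, by omega⟩⟩

theorem exists_lt_eq_sub_add_iff (hT : T ≤ A) :
    (∃ t < T, (i, j) = (A - t, B + t)) ↔ B ≤ j ∧ j < B + T ∧ i + j = A + B := by
  simp only [Prod.mk.injEq]
  exact ⟨fun ⟨t, ht, hi, hj⟩ => by omega, fun h => ⟨j - B, by omega⟩⟩

end AntidiagonalSegments

/-- explicit description of the roots supported on the singular directions
`θ_ℓ = -(2ℓ+1)π/(2(n+1))`, `ℓ ∈ {0, 1, n}`, in the case `n + 1 = 2m + 1`. -/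
theorem stmt_5 (n m c : ℕ) (hm : 2 ≤ m) (hnm : n + 1 = 2 * m + 1)
    (ω : ℂ) (hω : ω = Complex.exp (2 * Real.pi * Complex.I / (n + 1)))
    (R : ℕ → Set (ℕ × ℕ))
    (hR : ∀ ℓ, R ℓ = {p | p.1 ≤ n ∧ p.2 ≤ n ∧ p.1 ≠ p.2 ∧
      ∃ r : ℝ, 0 < r ∧ ω ^ p.2 - ω ^ p.1 =
        (r : ℂ) * Complex.exp (-((2 * (ℓ : ℂ) + 1) * Real.pi * Complex.I) / (2 * (n + 1)))}) :
    (m = 2 * c →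
      (R 0 = {p | ∃ t < c, p = (2*c - t, t)} ∪ {p | ∃ t < c, p = (2*c + 1 + t, 4*c - t)} ∧
       R 1 = {p | ∃ t < c, p = (2*c + t, 4*c - t)} ∪ {p | ∃ t < c, p = (2*c - 1 - t, t)} ∧
       R n = {p | ∃ t < c - 1, p = (4*c - t, 2*c + 2 + t)} ∪ {p | ∃ t < c + 1, p = (t, 2*c + 1 - t)})) ∧
    (m = 2 * c + 1 →
      (R 0 = {p | ∃ t < c + 1, p = (2*c + 1 - t, t)} ∪ {p | ∃ t < c, p = (2*c + 2 + t, 4*c + 2 - t)} ∧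
       R 1 = {p | ∃ t < c, p = (2*c - t, t)} ∪ {p | ∃ t < c + 1, p = (2*c + 1 + t, 4*c + 2 - t)} ∧
       R n = {p | ∃ t < c + 1, p = (t, 2*c + 2 - t)} ∪ {p | ∃ t < c, p = (4*c + 2 - t, 2*c + 3 + t)})) := by
  have hmem (ℓ : ℕ) (hℓ : ℓ ≤ n) (i j : ℕ) : (i, j) ∈ R ℓ ↔ i ≤ n ∧ j ≤ n ∧
      ((i < j ∧ i + j + ℓ + m + 1 = 2 * (n + 1)) ∨
        (j < i ∧ (i + j + ℓ + m + 1 = n + 1 ∨ i + j + ℓ + m + 1 = 3 * (n + 1)))) := by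
    rw [hR, Set.mem_ofPred_eq]
    refine and_congr_right fun hi => and_congr_right fun hj => ?_
    rw [exists_pos_pow_sub_pow_eq_iff hnm hω hℓ hi hj]
    omega
  constructor <;> rintro rfl <;> refine ⟨?_, ?_, ?_⟩ <;> ext ⟨i, j⟩ <;>
    simp (disch := omega) only [Set.mem_union, Set.mem_ofPred_eq, hmem, exists_lt_eq_sub_self_iff,
      exists_lt_eq_self_sub_iff, exists_lt_eq_add_sub_iff, exists_lt_eq_sub_add_iff] <;>
    omega
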